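/- arXiv:2509.08190 — 2 statements merged into one kernel-verified Lean document; each statement's English description precedes it below -/
import Mathlib

section
/- For the two tetrahedra T1 = convexHull{(0,1,-√(1/8)), (√(3/4),-1/2,-√(1/8)), (-√(3/4),-1/2,-√(1/8)), (0,0,√(9/8))} and T2 = convexHull{((2-√2)/4, (5√6-2√3)/12, (2+√2)/4), (-(2-√2)/4, (5√6-2√3)/12, -(2+√2)/4), ((2+√2)/4, -(2√3+√6)/12, -(2-√2)/4), (-(2+√2)/4, -(2√3+√6)/12, (2-√2)/4)}, the projection onto the xy-plane of (√6/(1+√2))·T2 is contained in the projection onto the xy-plane of T1. -/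
open Pointwise

noncomputable def T1 : Set (Fin 3 → ℝ) :=
  convexHull ℝ {![0, 1, -Real.sqrt (1/8)],
                 ![Real.sqrt (3/4), -1/2, -Real.sqrt (1/8)],
                 ![-Real.sqrt (3/4), -1/2, -Real.sqrt (1/8)],
                 ![0, 0, Real.sqrt (9/8)]}

noncomputable def T2 : Set (Fin 3 → ℝ) :=
  convexHull ℝ {![(2 - Real.sqrt 2)/4, (5*Real.sqrt 6 - 2*Real.sqrt 3)/12, (2 + Real.sqrt 2)/4],
                 ![-(2 - Real.sqrt 2)/4, (5*Real.sqrt 6 - 2*Real.sqrt 3)/12, -(2 + Real.sqrt 2)/4],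
                 ![(2 + Real.sqrt 2)/4, -(2*Real.sqrt 3 + Real.sqrt 6)/12, -(2 - Real.sqrt 2)/4],
                 ![-(2 + Real.sqrt 2)/4, -(2*Real.sqrt 3 + Real.sqrt 6)/12, (2 - Real.sqrt 2)/4]}

def projXY (p : Fin 3 → ℝ) : Fin 2 → ℝ := ![p 0, p 1]

theorem scaled_T2_projection_subset_T1_projection :
    projXY '' ((Real.sqrt 6 / (1 + Real.sqrt 2)) • T2) ⊆ projXY '' T1 := by
  have ha2 : Real.sqrt 2 ^ 2 = 2 := Real.sq_sqrt (by norm_num)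
  have hb2 : Real.sqrt 3 ^ 2 = 3 := Real.sq_sqrt (by norm_num)
  have ha0 : (0:ℝ) ≤ Real.sqrt 2 := Real.sqrt_nonneg 2
  have ha1 : (1:ℝ) ≤ Real.sqrt 2 := by nlinarith
  have ha32 : Real.sqrt 2 ≤ 3/2 := by nlinarith
  have h6 : Real.sqrt 6 = Real.sqrt 2 * Real.sqrt 3 := by
    rw [← Real.sqrt_mul (by norm_num : (0:ℝ) ≤ 2)]; norm_num
  have h34 : Real.sqrt (3/4) = Real.sqrt 3 / 2 := by
    rw [Real.sqrt_div (by norm_num : (0:ℝ) ≤ 3), show Real.sqrt 4 = 2 by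
      rw [show (4:ℝ) = 2^2 by norm_num, Real.sqrt_sq (by norm_num)]]
  have hμ : Real.sqrt 6 / (1 + Real.sqrt 2) = Real.sqrt 2 * Real.sqrt 3 * (Real.sqrt 2 - 1) := by
    rw [h6, div_eq_iff (by positivity)]
    linear_combination (-(Real.sqrt 2 * Real.sqrt 3)) * ha2
  have hlin : IsLinearMap ℝ projXY :=
    ⟨by intro x y; funext i; fin_cases i <;> simp [projXY],
     by intro c x; funext i; fin_cases i <;> simp [projXY]⟩
  rw [T1, T2, ← convexHull_smul, hlin.image_convexHull, hlin.image_convexHull]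
  apply convexHull_min _ (convex_convexHull ℝ _)
  rw [Set.smul_set_insert, Set.smul_set_insert, Set.smul_set_insert, Set.smul_set_singleton,
    Set.image_insert_eq, Set.image_insert_eq, Set.image_insert_eq, Set.image_singleton,
    Set.image_insert_eq, Set.image_insert_eq, Set.image_insert_eq, Set.image_singleton]
  set a := Real.sqrt 2
  set b := Real.sqrt 3
  have p1mem : (![0, 1] : Fin 2 → ℝ) ∈
      convexHull ℝ {projXY ![0, 1, -Real.sqrt (1/8)], projXY ![Real.sqrt (3/4), -1/2, -Real.sqrt (1/8)],
        projXY ![-Real.sqrt (3/4), -1/2, -Real.sqrt (1/8)], projXY ![0, 0, Real.sqrt (9/8)]} := by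
    apply subset_convexHull
    left
    funext i; fin_cases i <;> simp [projXY]
  have p2mem : (![b/2, -1/2] : Fin 2 → ℝ) ∈
      convexHull ℝ {projXY ![0, 1, -Real.sqrt (1/8)], projXY ![Real.sqrt (3/4), -1/2, -Real.sqrt (1/8)],
        projXY ![-Real.sqrt (3/4), -1/2, -Real.sqrt (1/8)], projXY ![0, 0, Real.sqrt (9/8)]} := by
    apply subset_convexHull
    right; left
    funext i; fin_cases i <;> simp [projXY, h34]
  have p3mem : (![-(b/2), -1/2] : Fin 2 → ℝ) ∈
      convexHull ℝ {projXY ![0, 1, -Real.sqrt (1/8)], projXY ![Real.sqrt (3/4), -1/2, -Real.sqrt (1/8)],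
        projXY ![-Real.sqrt (3/4), -1/2, -Real.sqrt (1/8)], projXY ![0, 0, Real.sqrt (9/8)]} := by
    apply subset_convexHull
    right; right; left
    funext i; fin_cases i <;> simp [projXY, h34]
  have hconv := convex_convexHull ℝ
      ({projXY ![0, 1, -Real.sqrt (1/8)], projXY ![Real.sqrt (3/4), -1/2, -Real.sqrt (1/8)],
        projXY ![-Real.sqrt (3/4), -1/2, -Real.sqrt (1/8)], projXY ![0, 0, Real.sqrt (9/8)]} : Set (Fin 2 → ℝ))
  have hA : (0:ℝ) ≤ 2*a - 2 := by linarith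
  have hB : (0:ℝ) ≤ 3 - 2*a := by linarith
  have hAB : (2*a - 2) + (3 - 2*a) = 1 := by ring
  apply Set.insert_subset_iff.2
  constructor
  · -- q1 = (2a-2)•p1 + (3-2a)•p2
    have := hconv p1mem p2mem hA hB hAB
    convert this using 1
    funext i; fin_cases i <;>
      simp [projXY, hμ, Pi.smul_apply, smul_eq_mul]
    · linear_combination (b/4*(3-a)) * ha2
    · linear_combination ((5*a^3 - 7*a^2 + 2*a)/12) * hb2 + ((5*a-7)/4) * ha2 + (5*a*b*(a-1)/12) * h6
  apply Set.insert_subset_iff.2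
  constructor
  · -- q2 = (2a-2)•p1 + (3-2a)•p3
    have := hconv p1mem p3mem hA hB hAB
    convert this using 1
    funext i; fin_cases i <;>
      simp [projXY, hμ, Pi.smul_apply, smul_eq_mul]
    · linear_combination (-(b/4*(3-a))) * ha2
    · linear_combination ((5*a^3 - 7*a^2 + 2*a)/12) * hb2 + ((5*a-7)/4) * ha2 + (5*a*b*(a-1)/12) * h6
  apply Set.insert_subset_iff.2
  constructor
  · -- q3 = p2
    convert p2mem using 1
    funext i; fin_cases i <;>
      simp [projXY, hμ, Pi.smul_apply, smul_eq_mul]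
    · linear_combination (b*(a+1)/4) * ha2
    · linear_combination (-(a^3 + a^2 - 2*a)/12) * hb2 + (-(a+1)/4) * ha2 + (-(a*b*(a-1))/12) * h6
  apply Set.singleton_subset_iff.2
  · -- q4 = p3
    convert p3mem using 1
    funext i; fin_cases i <;>
      simp [projXY, hμ, Pi.smul_apply, smul_eq_mul]
    · linear_combination (-(b*(a+1)/4)) * ha2
    · linear_combination (-(a^3 + a^2 - 2*a)/12) * hb2 + (-(a+1)/4) * ha2 + (-(a*b*(a-1))/12) * h6
end

section
/- Let f₁,…,f_N : ℝⁿ → ℝ be functions differentiable at x, and let f(y) = minᵢ fᵢ(y). Then for every direction v ∈ ℝⁿ, the one-sided directional derivative of f at x in direction v exists and equals min{∇fᵢ(x)ᵀv : i such that fᵢ(x) = f(x)}. -/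
/-!
By continuity, the inactive functions stay strictly above an active one near `x`, so for small
`t > 0` the minimum `f (x + t • v)` is a minimum over the active indices only. On those indices
`fᵢ x = f x`, so the difference quotient of `f` is the minimum of the difference quotients of
the active `fᵢ`, and a finite minimum passes to the limit.
-/

open Filter Set Topology

section ActiveIndices

variable {ι α R : Type*} [Fintype ι] [ConditionallyCompleteLinearOrder R]

open scoped Classical in
noncomputable def activeIndices (c : ι → R) : Finset ι :=
  Finset.univ.filter fun i => c i = ⨅ j, c j

theorem mem_activeIndices {c : ι → R} {i : ι} : i ∈ activeIndices c ↔ c i = ⨅ j, c j := by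
  simp [activeIndices]

theorem activeIndices_nonempty [Nonempty ι] (c : ι → R) : (activeIndices c).Nonempty :=
  let ⟨i, hi⟩ := exists_eq_ciInf_of_finite (f := c)
  ⟨i, mem_activeIndices.2 hi⟩

theorem inf'_activeIndices_eq_sInf [Nonempty ι] {β : Type*} [ConditionallyCompleteLinearOrder β]
    (c : ι → R) (d : ι → β) :
    (activeIndices c).inf' (activeIndices_nonempty c) d =
      sInf {r : β | ∃ i, c i = ⨅ j, c j ∧ r = d i} := by
  rw [Finset.inf'_eq_csInf_image]
  congr 1
  ext r
  simp [mem_activeIndices, eq_comm]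

theorem eventually_iInf_eq_inf'_activeIndices [TopologicalSpace R] [OrderClosedTopology R]
    [Nonempty ι] {l : Filter α} {u : ι → α → R}
    {c : ι → R} (hu : ∀ i, Tendsto (u i) l (𝓝 (c i))) :
    ∀ᶠ a in l, ⨅ i, u i a = (activeIndices c).inf' (activeIndices_nonempty c) (u · a) := by
  obtain ⟨j, hj⟩ := activeIndices_nonempty c
  have hlt : ∀ i ∉ activeIndices c, c j < c i := fun i hi =>
    (mem_activeIndices.1 hj).trans_lt <| (ciInf_le (Finite.bddBelow_range c) i).lt_of_ne
      fun h => hi (mem_activeIndices.2 h.symm)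
  have hev : ∀ᶠ a in l, ∀ i ∉ activeIndices c, u j a < u i a :=
    eventually_all.2 fun i => by
      by_cases hi : i ∈ activeIndices c
      · exact .of_forall fun _ h => (h hi).elim
      · exact ((hu j).eventually_lt (hu i) (hlt i hi)).mono fun _ h _ => h
  filter_upwards [hev] with a ha
  refine le_antisymm (Finset.le_inf' _ _ fun i _ => ciInf_le (Finite.bddBelow_range _) i) ?_
  refine le_ciInf fun i => ?_
  by_cases hi : i ∈ activeIndices c
  · exact Finset.inf'_le _ hi
  · exact (Finset.inf'_le _ hj).trans (ha i hi).le

end ActiveIndices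

theorem HasDerivWithinAt.iInf_Ioi {ι : Type*} [Fintype ι] [Nonempty ι] {φ : ι → ℝ → ℝ}
    {d : ι → ℝ} {a : ℝ} (hφ : ∀ i, HasDerivWithinAt (φ i) (d i) (Ioi a) a) :
    HasDerivWithinAt (fun t => ⨅ i, φ i t)
      ((activeIndices (φ · a)).inf' (activeIndices_nonempty _) d) (Ioi a) a := by
  have hS := activeIndices_nonempty (φ · a)
  have hmin := eventually_iInf_eq_inf'_activeIndices fun i => (hφ i).continuousWithinAt
  simp_rw [hasDerivWithinAt_iff_tendsto_slope' self_notMem_Ioi] at hφ ⊢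
  refine (Tendsto.finset_inf'_nhds_apply hS fun i _ => hφ i).congr' ?_
  filter_upwards [hmin, self_mem_nhdsWithin] with t ht hta
  set g := fun y => (y - ⨅ i, φ i a) / (t - a)
  have hg : Monotone g := fun _ _ h =>
    div_le_div_of_nonneg_right (sub_le_sub_right h _) (sub_pos.2 hta).le
  rw [slope_def_field, ht]
  refine ((Finset.apply_inf'_eq_inf'_comp hS g fun _ _ => hg.map_min).trans ?_).symm
  exact Finset.inf'_congr _ rfl fun i hi => by
    rw [Function.comp_apply, slope_def_field, mem_activeIndices.1 hi]

theorem directional_derivative_of_finite_min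
    {N nn : ℕ} [NeZero N]
    (fi : Fin N → EuclideanSpace ℝ (Fin nn) → ℝ)
    (D : Fin N → (EuclideanSpace ℝ (Fin nn) →L[ℝ] ℝ))
    (x : EuclideanSpace ℝ (Fin nn))
    (hD : ∀ i, HasFDerivAt (fi i) (D i) x)
    (f : EuclideanSpace ℝ (Fin nn) → ℝ) (hf : f = fun y => ⨅ i, fi i y)
    (v : EuclideanSpace ℝ (Fin nn)) :
    Filter.Tendsto (fun t : ℝ => (f (x + t • v) - f x) / t)
      (nhdsWithin 0 (Set.Ioi 0))
      (nhds (sInf {r : ℝ | ∃ i, fi i x = f x ∧ r = D i v})) := by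
  subst hf
  have hline : HasDerivAt (fun t : ℝ => x + t • v) v 0 := by
    simpa using ((hasDerivAt_id (0 : ℝ)).smul_const v).const_add x
  have hmin := HasDerivWithinAt.iInf_Ioi fun i =>
    ((hD i).comp_hasDerivAt_of_eq 0 hline (by simp)).hasDerivWithinAt (s := Ioi 0)
  rw [hasDerivWithinAt_iff_tendsto_slope' self_notMem_Ioi] at hmin
  simp only [Function.comp_apply, zero_smul, add_zero, inf'_activeIndices_eq_sInf] at hmin
  exact hmin.congr fun t => by simp [slope_def_field]
end
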